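/- arXiv:1402.6510 — 4 statements merged into one kernel-verified Lean document; each statement's English description precedes it below -/
import Mathlib

section
/- Let A = (A, σ, δ, τ) be a fuzzy automaton and φ a reflexive weakly right invariant fuzzy relation on A. Define φ_ε = σ ∘ φ, φ_{ux} = φ_u ∘ δ_x ∘ φ, and the crisp-deterministic fuzzy automaton A_φ with states {φ_u : u ∈ X*}, initial state φ_ε, transitions δ_φ(φ_u, x) = φ_{ux}, and terminal membership τ_φ(φ_u) = φ_u ∘ τ. Then A_φ recognizes the same fuzzy language as A: for every word u ∈ X*, τ_φ(δ_φ*(φ_ε, u)) = σ ∘ δ_u ∘ τ. -/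
namespace FuzzyAut

/-- Composition of fuzzy relations. -/
def rcomp {L : Type*} [CompleteLattice L] [CommMonoid L] {A B C : Type*}
    (α : A → B → L) (β : B → C → L) : A → C → L :=
  fun a c => ⨆ b, α a b * β b c

/-- Composition of a fuzzy set with a fuzzy relation. -/
def scomp {L : Type*} [CompleteLattice L] [CommMonoid L] {A B : Type*}
    (f : A → L) (α : A → B → L) : B → L :=
  fun b => ⨆ a, f a * α a b

/-- Composition of a fuzzy relation with a fuzzy set. -/
def rscomp {L : Type*} [CompleteLattice L] [CommMonoid L] {A B : Type*}
    (α : A → B → L) (g : B → L) : A → L :=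
  fun a => ⨆ b, α a b * g b

/-- Scalar composition of two fuzzy sets. -/
def sscomp {L : Type*} [CompleteLattice L] [CommMonoid L] {A : Type*}
    (f g : A → L) : L := ⨆ a, f a * g a

/-- The crisp equality fuzzy relation. -/
def eqRel {L : Type*} [CompleteLattice L] [CommMonoid L] (A : Type*) : A → A → L :=
  fun a b => ⨆ _ : a = b, (1 : L)

/-- The fuzzy transition relation extended to words. -/
def relWord {L : Type*} [CompleteLattice L] [CommMonoid L] {A X : Type*}
    (δ : X → A → A → L) : List X → A → A → L
  | [] => eqRel A
  | x :: u => rcomp (δ x) (relWord δ u)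

/-- The family φ_u : φ_ε = σ∘φ, φ_{ux} = φ_u∘δ_x∘φ. -/
def phiFam {L : Type*} [CompleteLattice L] [CommMonoid L] {A X : Type*}
    (σ : A → L) (δ : X → A → A → L) (φ : A → A → L) (u : List X) : A → L :=
  u.foldl (fun f x => scomp (scomp f (δ x)) φ) (scomp σ φ)

/-- The family ψ^u : ψ^ε = ψ∘τ, ψ^{xu} = ψ∘δ_x∘ψ^u. -/
def psiFam {L : Type*} [CompleteLattice L] [CommMonoid L] {A X : Type*}
    (τ : A → L) (δ : X → A → A → L) (ψ : A → A → L) : List X → A → L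
  | [] => rscomp ψ τ
  | x :: u => rscomp ψ (rscomp (δ x) (psiFam τ δ ψ u))

/-- Reflexivity of a fuzzy relation. -/
def IsRefl {L : Type*} [CompleteLattice L] [CommMonoid L] {A : Type*}
    (φ : A → A → L) : Prop := ∀ a, φ a a = 1

/-- Transitivity of a fuzzy relation. -/
def IsTrans {L : Type*} [CompleteLattice L] [CommMonoid L] {A : Type*}
    (φ : A → A → L) : Prop := ∀ a b c, φ a b * φ b c ≤ φ a c

section Aux

variable {L : Type*} [CompleteLattice L] [CommMonoid L]
variable (res : L → L → L) (hres : ∀ x y z : L, x * y ≤ z ↔ x ≤ res y z)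
include res hres

lemma mul_mono_l {a b c : L} (h : a ≤ b) : a * c ≤ b * c :=
  (hres a c (b * c)).2 (h.trans ((hres b c (b * c)).1 le_rfl))

lemma mul_mono_r {a b c : L} (h : a ≤ b) : c * a ≤ c * b := by
  rw [mul_comm c a, mul_comm c b]; exact mul_mono_l res hres h

lemma iSup_mul' {ι : Sort*} (f : ι → L) (b : L) : (⨆ i, f i) * b = ⨆ i, f i * b := by
  apply le_antisymm
  · exact (hres _ _ _).2 (iSup_le fun i => (hres _ _ _).1 (le_iSup (fun i => f i * b) i))
  · exact iSup_le fun i => mul_mono_l res hres (le_iSup f i)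

lemma mul_iSup' {ι : Sort*} (f : ι → L) (b : L) : b * (⨆ i, f i) = ⨆ i, b * f i := by
  rw [mul_comm, iSup_mul' res hres]
  exact iSup_congr fun i => mul_comm _ _

lemma bot_mul' (b : L) : (⊥ : L) * b = ⊥ :=
  le_antisymm ((hres _ _ _).2 bot_le) bot_le

lemma eqRel_mul {A : Type*} (a : A) (g : A → L) :
    (⨆ b, (FuzzyAut.eqRel A a b : L) * g b) = g a := by
  apply le_antisymm
  · apply iSup_le; intro b
    by_cases h : a = b
    · subst h; simp [FuzzyAut.eqRel]
    · simp only [FuzzyAut.eqRel, h, iSup_false]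
      rw [bot_mul' res hres]; exact bot_le
  · calc g a = FuzzyAut.eqRel A a a * g a := by simp [FuzzyAut.eqRel]
    _ ≤ _ := le_iSup (fun b => FuzzyAut.eqRel A a b * g b) a

lemma mul_eqRel {A : Type*} (a : A) (g : A → L) :
    (⨆ b, g b * (FuzzyAut.eqRel A b a : L)) = g a := by
  rw [show (fun b => g b * FuzzyAut.eqRel A b a) = fun b => (FuzzyAut.eqRel A a b : L) * g b from ?_,
    eqRel_mul res hres]
  funext b
  rw [mul_comm]
  congr 1
  simp only [FuzzyAut.eqRel, eq_comm]

open FuzzyAut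

lemma sscomp_scomp {A B : Type*} (f : A → L) (α : A → B → L) (g : B → L) :
    sscomp (scomp f α) g = sscomp f (rscomp α g) := by
  simp only [sscomp, scomp, rscomp, iSup_mul' res hres, mul_iSup' res hres]
  rw [iSup_comm]
  exact iSup_congr fun a => iSup_congr fun b => mul_assoc _ _ _

lemma rscomp_rscomp {A B C : Type*} (α : A → B → L) (β : B → C → L) (g : C → L) :
    rscomp α (rscomp β g) = rscomp (rcomp α β) g := by
  funext a
  simp only [rscomp, rcomp, iSup_mul' res hres, mul_iSup' res hres]
  rw [iSup_comm]
  exact iSup_congr fun b => iSup_congr fun c => (mul_assoc _ _ _).symm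

lemma rcomp_assoc {A B C D : Type*} (α : A → B → L) (β : B → C → L) (γ : C → D → L) :
    rcomp (rcomp α β) γ = rcomp α (rcomp β γ) := by
  funext a d
  simp only [rcomp, iSup_mul' res hres, mul_iSup' res hres]
  rw [iSup_comm]
  exact iSup_congr fun b => iSup_congr fun c => (mul_assoc _ _ _)

lemma eqRel_rcomp {A B : Type*} (β : A → B → L) : rcomp (eqRel A) β = β := by
  funext a b; exact eqRel_mul res hres a (fun c => β c b)

lemma rcomp_eqRel {A B : Type*} (β : A → B → L) : rcomp β (eqRel B) = β := by
  funext a b; exact mul_eqRel res hres b (fun c => β a c)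

lemma scomp_eqRel {A : Type*} (f : A → L) : scomp f (eqRel A) = f := by
  funext a; exact mul_eqRel res hres a f

lemma rscomp_eqRel {A : Type*} (g : A → L) : rscomp (eqRel A) g = g := by
  funext a; exact eqRel_mul res hres a g

lemma relWord_snoc {A X : Type*} (δ : X → A → A → L) (u : List X) (x : X) :
    relWord δ (u ++ [x]) = rcomp (relWord δ u) (δ x) := by
  induction u with
  | nil => simp [relWord, eqRel_rcomp res hres, rcomp_eqRel res hres]
  | cons y u ih =>
    simp only [List.cons_append, relWord, List.append_eq, ih, rcomp_assoc res hres]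

omit res hres in
lemma phiFam_snoc {A X : Type*} (σ : A → L) (δ : X → A → A → L) (φ : A → A → L)
    (u : List X) (x : X) :
    phiFam σ δ φ (u ++ [x]) = scomp (scomp (phiFam σ δ φ u) (δ x)) φ := by
  simp [phiFam]

omit res hres in
lemma phi_absorb {A : Type*} (φ : A → A → L) (hrefl : FuzzyAut.IsRefl φ)
    (g : A → L) (hg : rscomp φ g ≤ g) : rscomp φ g = g := by
  apply le_antisymm hg
  intro a
  calc g a = φ a a * g a := by rw [hrefl a, one_mul]
  _ ≤ rscomp φ g a := le_iSup (fun b => φ a b * g b) a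

lemma key_lemma {A X : Type*} (σ : A → L) (δ : X → A → A → L) (τ : A → L)
    (φ : A → A → L) (hrefl : IsRefl φ)
    (hwri : ∀ v : List X, rscomp φ (rscomp (relWord δ v) τ) ≤ rscomp (relWord δ v) τ)
    (u : List X) : ∀ v : List X,
    sscomp (phiFam σ δ φ u) (rscomp (relWord δ v) τ)
      = sscomp (scomp σ (relWord δ u)) (rscomp (relWord δ v) τ) := by
  induction u using List.reverseRecOn with
  | nil =>
    intro v
    show sscomp (scomp σ φ) _ = _
    rw [sscomp_scomp res hres, phi_absorb φ hrefl _ (hwri v),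
      show relWord δ ([] : List X) = eqRel A from rfl, scomp_eqRel res hres]
  | append_singleton u x ih =>
    intro v
    rw [phiFam_snoc, sscomp_scomp res hres, phi_absorb φ hrefl _ (hwri v),
      sscomp_scomp res hres,
      show rscomp (δ x) (rscomp (relWord δ v) τ) = rscomp (relWord δ (x :: v)) τ from
        (rscomp_rscomp res hres _ _ _).trans rfl,
      ih (x :: v),
      show rscomp (relWord δ (x :: v)) τ = rscomp (δ x) (rscomp (relWord δ v) τ) from
        (rscomp_rscomp res hres _ _ _).symm,
      sscomp_scomp res hres, rscomp_rscomp res hres,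
      ← relWord_snoc res hres, ← sscomp_scomp res hres]

end Aux

/-- for a reflexive weakly right invariant fuzzy relation φ,
the cdfa A_φ (state after word u is φ_u, terminal membership φ_u∘τ) is
equivalent to A: for all u, τ_φ(δ_φ*(φ_ε,u)) = φ_u∘τ = σ∘δ_u∘τ. -/
theorem stmt6 {L : Type*} [CompleteLattice L] [CommMonoid L] (res : L → L → L) (hres : ∀ x y z : L, x * y ≤ z ↔ x ≤ res y z) (htop : ∀ x : L, x ≤ 1)
    {A X : Type*} (σ : A → L) (δ : X → A → A → L) (τ : A → L)
    (φ : A → A → L) (hrefl : IsRefl φ)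
    (hwri : ∀ u : List X, rscomp φ (rscomp (relWord δ u) τ) ≤ rscomp (relWord δ u) τ) :
    ∀ u : List X, sscomp (phiFam σ δ φ u) τ = sscomp (scomp σ (relWord δ u)) τ := by
  intro u
  have h := key_lemma res hres σ δ τ φ hrefl hwri u []
  rwa [show rscomp (relWord δ ([] : List X)) τ = τ from rscomp_eqRel res hres τ] at h
end FuzzyAut
end

section
/- Let φ be a weakly left invariant fuzzy quasi-order on a fuzzy automaton A, and B = A/φ the afterset fuzzy automaton. Then σ^B_u(aφ) = σ_u(a) for every u ∈ X* and a ∈ A, and consequently the Nerode automaton of A/φ is isomorphic to the Nerode automaton of A. -/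
namespace FuzzyAut

/-- The set of aftersets of a fuzzy relation φ (states of the afterset automaton A/φ). -/
def Aft {L : Type*} [CompleteLattice L] [CommMonoid L] {A : Type*} (φ : A → A → L) :=
  {f : A → L // ∃ a : A, f = fun b => φ a b}

/-- The afterset of a state. -/
def aft {L : Type*} [CompleteLattice L] [CommMonoid L] {A : Type*} (φ : A → A → L)
    (a : A) : Aft φ := ⟨fun b => φ a b, a, rfl⟩

/-- A representative of an afterset. -/
noncomputable def rep {L : Type*} [CompleteLattice L] [CommMonoid L] {A : Type*}
    {φ : A → A → L} (s : Aft φ) : A := s.2.choose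

/-- The fuzzy set of initial states of the afterset automaton A/φ : σ^B(aφ) = (σ∘φ)(a). -/
noncomputable def aftInit {L : Type*} [CompleteLattice L] [CommMonoid L] {A : Type*}
    (σ : A → L) (φ : A → A → L) : Aft φ → L := fun s => scomp σ φ (rep s)

/-- Transitions of the afterset automaton A/φ : δ^B_x(aφ,bφ) = (φ∘δ_x∘φ)(a,b). -/
noncomputable def aftTrans {L : Type*} [CompleteLattice L] [CommMonoid L] {A X : Type*}
    (δ : X → A → A → L) (φ : A → A → L) : X → Aft φ → Aft φ → L :=
  fun x s t => rcomp (rcomp φ (δ x)) φ (rep s) (rep t)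

/-- Terminal fuzzy set of the afterset automaton A/φ : τ^B(aφ) = (φ∘τ)(a). -/
noncomputable def aftTerm {L : Type*} [CompleteLattice L] [CommMonoid L] {A : Type*}
    (τ : A → L) (φ : A → A → L) : Aft φ → L := fun s => rscomp φ τ (rep s)



section Aux

variable {L : Type*} [CompleteLattice L] [CommMonoid L]

lemma fa_mul_mono (res : L → L → L) (hres : ∀ x y z : L, x * y ≤ z ↔ x ≤ res y z)
    {a b : L} (h : a ≤ b) (x : L) : a * x ≤ b * x :=
  (hres a x (b * x)).mpr (le_trans h ((hres b x (b * x)).mp le_rfl))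

lemma fa_iSup_mul (res : L → L → L) (hres : ∀ x y z : L, x * y ≤ z ↔ x ≤ res y z)
    {ι : Sort*} (f : ι → L) (x : L) : (⨆ i, f i) * x = ⨆ i, f i * x := by
  apply le_antisymm
  · exact (hres _ x _).mpr (iSup_le fun i => (hres _ x _).mp (le_iSup (fun i => f i * x) i))
  · exact iSup_le fun i => fa_mul_mono res hres (le_iSup f i) x

lemma fa_mul_iSup (res : L → L → L) (hres : ∀ x y z : L, x * y ≤ z ↔ x ≤ res y z)
    {ι : Sort*} (x : L) (f : ι → L) : (x * ⨆ i, f i) = ⨆ i, x * f i := by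
  rw [mul_comm, fa_iSup_mul res hres]
  simp only [mul_comm]

lemma fa_core (res : L → L → L) (hres : ∀ x y z : L, x * y ≤ z ↔ x ≤ res y z)
    {ι κ : Type*} (f : ι → L) (α : ι → κ → L) (g : κ → L) :
    (⨆ i, f i * ⨆ k, α i k * g k) = ⨆ k, (⨆ i, f i * α i k) * g k := by
  calc (⨆ i, f i * ⨆ k, α i k * g k)
      = ⨆ i, ⨆ k, f i * (α i k * g k) := by
        simp only [fa_mul_iSup res hres]
    _ = ⨆ k, ⨆ i, f i * α i k * g k := by
        rw [iSup_comm]; simp only [mul_assoc]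
    _ = ⨆ k, (⨆ i, f i * α i k) * g k := by
        simp only [fa_iSup_mul res hres]

lemma fa_scomp_rcomp (res : L → L → L) (hres : ∀ x y z : L, x * y ≤ z ↔ x ≤ res y z)
    {A B C : Type*} (f : A → L) (α : A → B → L) (β : B → C → L) :
    scomp f (rcomp α β) = scomp (scomp f α) β := by
  funext c
  simp only [scomp, rcomp]
  exact fa_core res hres f α (fun b => β b c)

lemma fa_sscomp_rscomp (res : L → L → L) (hres : ∀ x y z : L, x * y ≤ z ↔ x ≤ res y z)
    {A B : Type*} (f : A → L) (α : A → B → L) (g : B → L) :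
    sscomp f (rscomp α g) = sscomp (scomp f α) g := by
  simp only [sscomp, rscomp, scomp]
  exact fa_core res hres f α g

lemma fa_scomp_eqRel (res : L → L → L) (hres : ∀ x y z : L, x * y ≤ z ↔ x ≤ res y z)
    {A : Type*} (f : A → L) : scomp f (eqRel A) = f := by
  funext b
  simp only [scomp, eqRel]
  calc (⨆ a, f a * ⨆ _ : a = b, (1 : L))
      = ⨆ a, ⨆ _ : a = b, f a * 1 := by simp only [fa_mul_iSup res hres]
    _ = ⨆ a, ⨆ _ : a = b, f a := by simp only [mul_one]
    _ = f b := by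
        apply le_antisymm
        · exact iSup_le fun a => iSup_le fun h => h ▸ le_rfl
        · exact le_iSup_of_le b (le_iSup_of_le rfl le_rfl)

lemma fa_eqRel_rcomp (res : L → L → L) (hres : ∀ x y z : L, x * y ≤ z ↔ x ≤ res y z)
    {A B : Type*} (β : A → B → L) : rcomp (eqRel A) β = β := by
  funext a c
  simp only [rcomp, eqRel]
  calc (⨆ b, (⨆ _ : a = b, (1 : L)) * β b c)
      = ⨆ b, ⨆ _ : a = b, 1 * β b c := by simp only [fa_iSup_mul res hres]
    _ = ⨆ b, ⨆ _ : a = b, β b c := by simp only [one_mul]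
    _ = β a c := by
        apply le_antisymm
        · exact iSup_le fun b => iSup_le fun h => h ▸ le_rfl
        · exact le_iSup_of_le a (le_iSup_of_le rfl le_rfl)

lemma fa_rcomp_assoc (res : L → L → L) (hres : ∀ x y z : L, x * y ≤ z ↔ x ≤ res y z)
    {A B C D : Type*} (α : A → B → L) (β : B → C → L) (γ : C → D → L) :
    rcomp α (rcomp β γ) = rcomp (rcomp α β) γ := by
  funext a d
  simp only [rcomp]
  exact fa_core res hres (α a) β (fun c => γ c d)

lemma fa_relWord_append (res : L → L → L) (hres : ∀ x y z : L, x * y ≤ z ↔ x ≤ res y z)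
    {A X : Type*} (δ : X → A → A → L) (u v : List X) :
    relWord δ (u ++ v) = rcomp (relWord δ u) (relWord δ v) := by
  induction u with
  | nil => simp only [List.nil_append, relWord, fa_eqRel_rcomp res hres]
  | cons x u ih =>
      show rcomp (δ x) (relWord δ (u ++ v)) = _
      rw [ih, fa_rcomp_assoc res hres]
      rfl

lemma fa_sigma_snoc (res : L → L → L) (hres : ∀ x y z : L, x * y ≤ z ↔ x ≤ res y z)
    {A X : Type*} (σ : A → L) (δ : X → A → A → L) (v : List X) (x : X) :
    scomp σ (relWord δ (v ++ [x])) = scomp (scomp σ (relWord δ v)) (δ x) := by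
  rw [fa_relWord_append res hres, fa_scomp_rcomp res hres]
  show scomp (scomp σ (relWord δ v)) (rcomp (δ x) (eqRel A)) = _
  rw [fa_scomp_rcomp res hres, fa_scomp_eqRel res hres]

lemma fa_aft_rep {A : Type*} {φ : A → A → L} (s : Aft φ) : aft φ (rep s) = s :=
  Subtype.ext (s.2.choose_spec.symm)

lemma fa_iSup_aft {A : Type*} (φ : A → A → L) (F : Aft φ → L) :
    (⨆ s, F s) = ⨆ a, F (aft φ a) := by
  apply le_antisymm
  · refine iSup_le fun s => ?_
    have := le_iSup (fun a => F (aft φ a)) (rep s)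
    rwa [fa_aft_rep s] at this
  · exact iSup_le fun a => le_iSup F (aft φ a)

lemma fa_row {A : Type*} {φ : A → A → L} (a b : A) :
    φ (rep (aft φ a)) b = φ a b :=
  (congrFun ((aft φ a).2.choose_spec) b).symm

lemma fa_col {A : Type*} {φ : A → A → L} (hrefl : IsRefl φ) (htrans : IsTrans φ)
    (a b : A) : φ b (rep (aft φ a)) = φ b a := by
  have h1 : φ (rep (aft φ a)) a = 1 := (fa_row a a).trans (hrefl a)
  have h2 : φ a (rep (aft φ a)) = 1 :=
    (fa_row a (rep (aft φ a))).symm.trans (hrefl _)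
  apply le_antisymm
  · have := htrans b (rep (aft φ a)) a
    rwa [h1, mul_one] at this
  · have := htrans b a (rep (aft φ a))
    rwa [h2, mul_one] at this

lemma fa_main (res : L → L → L) (hres : ∀ x y z : L, x * y ≤ z ↔ x ≤ res y z)
    {A X : Type*} (σ : A → L) (δ : X → A → A → L) (φ : A → A → L)
    (hrefl : IsRefl φ) (htrans : IsTrans φ)
    (hwli : ∀ u : List X, scomp (scomp σ (relWord δ u)) φ ≤ scomp σ (relWord δ u)) :
    ∀ (u v : List X) (a : A),
      scomp (fun s => scomp (scomp σ (relWord δ v)) φ (rep s))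
        (relWord (aftTrans δ φ) u) (aft φ a)
        = scomp σ (relWord δ (v ++ u)) a := by
  have hσφ : ∀ v : List X, scomp (scomp σ (relWord δ v)) φ = scomp σ (relWord δ v) := by
    intro v
    refine le_antisymm (hwli v) ?_
    intro b
    refine le_iSup_of_le b ?_
    rw [hrefl b, mul_one]
  have hrepscomp : ∀ (f : A → L) (a : A), scomp f φ (rep (aft φ a)) = scomp f φ a := by
    intro f a
    simp only [scomp]
    exact iSup_congr fun b => by rw [fa_col hrefl htrans]
  intro u
  induction u with
  | nil =>
      intro v a
      show scomp _ (eqRel (Aft φ)) (aft φ a) = _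
      rw [fa_scomp_eqRel res hres]
      simp only [List.append_nil]
      rw [hrepscomp]
      exact congrFun (hσφ v) a
  | cons x u ih =>
      intro v a
      show scomp _ (rcomp (aftTrans δ φ x) (relWord (aftTrans δ φ) u)) (aft φ a) = _
      rw [fa_scomp_rcomp res hres]
      have hkey : scomp (fun s => scomp (scomp σ (relWord δ v)) φ (rep s)) (aftTrans δ φ x)
          = fun t => scomp (scomp σ (relWord δ (v ++ [x]))) φ (rep t) := by
        funext t
        show (⨆ s : Aft φ, scomp (scomp σ (relWord δ v)) φ (rep s) * aftTrans δ φ x s t) = _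
        rw [fa_iSup_aft]
        have step1 : ∀ a' : A,
            scomp (scomp σ (relWord δ v)) φ (rep (aft φ a')) * aftTrans δ φ x (aft φ a') t
              = scomp (scomp σ (relWord δ v)) φ a' * rcomp (rcomp φ (δ x)) φ a' (rep t) := by
          intro a'
          rw [hrepscomp]
          congr 1
          show rcomp (rcomp φ (δ x)) φ (rep (aft φ a')) (rep t) = _
          simp only [rcomp, fa_row]
        simp only [step1]
        show scomp (scomp (scomp σ (relWord δ v)) φ) (rcomp (rcomp φ (δ x)) φ) (rep t) = _
        rw [hσφ, fa_scomp_rcomp res hres, fa_scomp_rcomp res hres, hσφ,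
          fa_sigma_snoc res hres]
      rw [hkey]
      have := ih (v ++ [x]) a
      rw [List.append_assoc] at this
      simpa using this

end Aux

/-- for a weakly left invariant fuzzy quasi-order φ and
B = A/φ, σ^B_u(aφ) = σ_u(a) for all u and a, and consequently the Nerode
automaton of A/φ is isomorphic to the Nerode automaton of A. -/
theorem stmt13 {L : Type*} [CompleteLattice L] [CommMonoid L] (res : L → L → L) (hres : ∀ x y z : L, x * y ≤ z ↔ x ≤ res y z) (htop : ∀ x : L, x ≤ 1)
    {A X : Type*} (σ : A → L) (δ : X → A → A → L) (τ : A → L)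
    (φ : A → A → L) (hrefl : IsRefl φ) (htrans : IsTrans φ)
    (hwli : ∀ u : List X, scomp (scomp σ (relWord δ u)) φ ≤ scomp σ (relWord δ u)) :
    (∀ (u : List X) (a : A),
      scomp (aftInit σ φ) (relWord (aftTrans δ φ) u) (aft φ a)
        = scomp σ (relWord δ u) a) ∧
    ∃ ξ : {g : Aft φ → L // ∃ u : List X,
            g = scomp (aftInit σ φ) (relWord (aftTrans δ φ) u)} →
          {f : A → L // ∃ u : List X, f = scomp σ (relWord δ u)},
      Function.Bijective ξ ∧
      (∀ u : List X,
        (ξ ⟨scomp (aftInit σ φ) (relWord (aftTrans δ φ) u), u, rfl⟩).1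
          = scomp σ (relWord δ u)) ∧
      (∀ s, sscomp (ξ s).1 τ = sscomp s.1 (aftTerm τ φ)) := by
  have part1 : ∀ (u : List X) (a : A),
      scomp (aftInit σ φ) (relWord (aftTrans δ φ) u) (aft φ a)
        = scomp σ (relWord δ u) a := by
    intro u a
    have hinit : aftInit σ φ
        = fun s => scomp (scomp σ (relWord δ ([] : List X))) φ (rep s) := by
      funext s
      show scomp σ φ (rep s) = scomp (scomp σ (eqRel A)) φ (rep s)
      rw [fa_scomp_eqRel res hres]
    rw [hinit]
    exact fa_main res hres σ δ φ hrefl htrans hwli u [] a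
  have hσφ : ∀ v : List X, scomp (scomp σ (relWord δ v)) φ = scomp σ (relWord δ v) := by
    intro v
    refine le_antisymm (hwli v) ?_
    intro b
    refine le_iSup_of_le b ?_
    rw [hrefl b, mul_one]
  refine ⟨part1, ?_⟩
  refine ⟨fun s => ⟨fun a => s.1 (aft φ a), ?_⟩, ⟨?_, ?_⟩, ?_, ?_⟩
  · obtain ⟨u, hu⟩ := s.2
    refine ⟨u, ?_⟩
    funext a
    rw [hu]
    exact part1 u a
  · -- injective
    intro s t h
    apply Subtype.ext
    funext s'
    have h' := congrFun (congrArg Subtype.val h) (rep s')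
    simp only at h'
    rwa [fa_aft_rep s'] at h'
  · -- surjective
    intro f
    obtain ⟨u, hu⟩ := f.2
    refine ⟨⟨scomp (aftInit σ φ) (relWord (aftTrans δ φ) u), u, rfl⟩, ?_⟩
    apply Subtype.ext
    funext a
    show scomp (aftInit σ φ) (relWord (aftTrans δ φ) u) (aft φ a) = f.1 a
    rw [hu]
    exact part1 u a
  · intro u
    funext a
    exact part1 u a
  · intro s
    obtain ⟨u, hu⟩ := s.2
    have hs1 : ∀ a : A, s.1 (aft φ a) = scomp σ (relWord δ u) a := by
      intro a
      rw [hu]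
      exact part1 u a
    show (⨆ a, s.1 (aft φ a) * τ a) = ⨆ s' : Aft φ, s.1 s' * aftTerm τ φ s'
    rw [fa_iSup_aft]
    have step : ∀ a : A, s.1 (aft φ a) * aftTerm τ φ (aft φ a)
        = scomp σ (relWord δ u) a * rscomp φ τ a := by
      intro a
      rw [hs1]
      congr 1
      show rscomp φ τ (rep (aft φ a)) = rscomp φ τ a
      simp only [rscomp, fa_row]
    simp only [step]
    show (⨆ a, s.1 (aft φ a) * τ a) = sscomp (scomp σ (relWord δ u)) (rscomp φ τ)
    rw [fa_sscomp_rscomp res hres, hσφ]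
    simp only [sscomp, hs1]
end FuzzyAut
end

section
/- Dually, if φ is a reflexive weakly right invariant fuzzy relation on a fuzzy automaton A, then for every word u = x₁...xₙ: φ ∘ δ_{x₁} ∘ φ ∘ ... ∘ δ_{xₙ} ∘ φ ∘ τ = τ_{x₁...xₙ}, where τ_w = δ_w ∘ τ. -/
namespace FuzzyAut

private lemma aux_mono {L : Type*} [CompleteLattice L] [CommMonoid L]
    (res : L → L → L) (hres : ∀ x y z : L, x * y ≤ z ↔ x ≤ res y z)
    {a a' : L} (b : L) (h : a ≤ a') : a * b ≤ a' * b :=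
  (hres a b (a' * b)).mpr (h.trans ((hres a' b (a' * b)).mp le_rfl))

private lemma aux_sup {L : Type*} [CompleteLattice L] [CommMonoid L]
    (res : L → L → L) (hres : ∀ x y z : L, x * y ≤ z ↔ x ≤ res y z)
    {ι : Sort*} (f : ι → L) (b : L) : (⨆ i, f i) * b = ⨆ i, f i * b := by
  apply le_antisymm
  · exact (hres _ _ _).mpr (iSup_le fun i => (hres _ _ _).mp (le_iSup (fun i => f i * b) i))
  · exact iSup_le fun i => aux_mono res hres b (le_iSup f i)

/-- dually, for a reflexive weakly right invariant fuzzy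
relation φ, φ∘δ_{x₁}∘φ∘⋯∘δ_{xₙ}∘φ∘τ = τ_{x₁⋯xₙ} for every word. -/
theorem stmt16 {L : Type*} [CompleteLattice L] [CommMonoid L] (res : L → L → L) (hres : ∀ x y z : L, x * y ≤ z ↔ x ≤ res y z) (htop : ∀ x : L, x ≤ 1)
    {A X : Type*} (σ : A → L) (δ : X → A → A → L) (τ : A → L)
    (φ : A → A → L) (hrefl : IsRefl φ)
    (hwri : ∀ w : List X, rscomp φ (rscomp (relWord δ w) τ) ≤ rscomp (relWord δ w) τ) :
    ∀ w : List X, psiFam τ δ φ w = rscomp (relWord δ w) τ := by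
  have hmono : ∀ {a a' : L} (b : L), a ≤ a' → a * b ≤ a' * b := fun b h =>
    aux_mono res hres b h
  -- identity of rscomp with eqRel
  have hid : ∀ g : A → L, rscomp (eqRel A (L := L)) g = g := by
    intro g
    funext a
    simp only [rscomp, eqRel]
    apply le_antisymm
    · refine iSup_le fun b => ?_
      rw [aux_sup res hres]
      exact iSup_le fun h => by rw [one_mul, h]
    · refine le_iSup_of_le a ?_
      calc g a = (1 : L) * g a := (one_mul _).symm
        _ ≤ (⨆ _ : a = a, (1 : L)) * g a := hmono _ (le_iSup_of_le rfl le_rfl)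
  -- associativity
  have hassoc : ∀ (α β : A → A → L) (g : A → L),
      rscomp α (rscomp β g) = rscomp (rcomp α β) g := by
    intro α β g
    funext a
    simp only [rscomp, rcomp]
    calc (⨆ b, α a b * ⨆ c, β b c * g c)
        = ⨆ b, ⨆ c, α a b * (β b c * g c) := by
          refine iSup_congr fun b => ?_
          rw [mul_comm, aux_sup res hres]
          exact iSup_congr fun c => mul_comm _ _
      _ = ⨆ c, ⨆ b, α a b * β b c * g c := by
          rw [iSup_comm]
          exact iSup_congr fun c => iSup_congr fun b => (mul_assoc _ _ _).symm
      _ = ⨆ c, (⨆ b, α a b * β b c) * g c :=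
          iSup_congr fun c => (aux_sup res hres _ _).symm
  -- absorption of φ
  have hphi : ∀ w : List X, rscomp φ (rscomp (relWord δ w) τ) = rscomp (relWord δ w) τ := by
    intro w
    refine le_antisymm (hwri w) fun a => ?_
    calc rscomp (relWord δ w) τ a = φ a a * rscomp (relWord δ w) τ a := by
          rw [hrefl a, one_mul]
      _ ≤ ⨆ b, φ a b * rscomp (relWord δ w) τ b :=
          le_iSup (fun b => φ a b * rscomp (relWord δ w) τ b) a
  intro w
  induction w with
  | nil =>
    show rscomp φ τ = rscomp (relWord δ []) τ
    have h1 : rscomp (relWord δ ([] : List X)) τ = τ := hid τ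
    have h2 := hphi ([] : List X)
    rw [h1] at h2 ⊢
    exact h2
  | cons x u ih =>
    show rscomp φ (rscomp (δ x) (psiFam τ δ φ u)) = rscomp (relWord δ (x :: u)) τ
    have h3 : rscomp (δ x) (rscomp (relWord δ u) τ) = rscomp (relWord δ (x :: u)) τ :=
      hassoc (δ x) (relWord δ u) τ
    rw [ih, h3]
    exact hphi (x :: u)

end FuzzyAut
end

section
/- Let φ be a weakly right invariant fuzzy quasi-order on a fuzzy automaton A over alphabet X = {x₁,...,x_m}. Then the children automaton A_φ^c is a homomorphic image of A_φ (via the map sending φ_u to φ_u^c); consequently |A_φ^c| ≤ |A_φ|. -/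
namespace FuzzyAut

/-- The child tuple φ_u^c = (φ_{ux₁},…,φ_{ux_m}, φ_u∘τ), encoded as a pair of
the function x ↦ φ_{ux} and the scalar φ_u∘τ. -/
def childTuple {L : Type*} [CompleteLattice L] [CommMonoid L] {A X : Type*}
    (σ : A → L) (δ : X → A → A → L) (φ : A → A → L) (τ : A → L)
    (u : List X) : (X → (A → L)) × L :=
  (fun x => phiFam σ δ φ (u ++ [x]), sscomp (phiFam σ δ φ u) τ)



lemma phiFam_append_singleton {L : Type*} [CompleteLattice L] [CommMonoid L] {A X : Type*}
    (σ : A → L) (δ : X → A → A → L) (φ : A → A → L) (u : List X) (x : X) :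
    phiFam σ δ φ (u ++ [x]) = scomp (scomp (phiFam σ δ φ u) (δ x)) φ := by
  simp [phiFam, List.foldl_append]

lemma childTuple_congr {L : Type*} [CompleteLattice L] [CommMonoid L] {A X : Type*}
    (σ : A → L) (δ : X → A → A → L) (φ : A → A → L) (τ : A → L) {u v : List X}
    (h : phiFam σ δ φ u = phiFam σ δ φ v) :
    childTuple σ δ φ τ u = childTuple σ δ φ τ v := by
  unfold childTuple
  refine Prod.ext ?_ ?_
  · funext x
    simp only [phiFam_append_singleton, h]
  · simp [h]

/-- for a weakly right invariant fuzzy quasi-order φ, the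
children automaton A_φ^c is a homomorphic image of A_φ via φ_u ↦ φ_u^c;
consequently |A_φ^c| ≤ |A_φ|. -/
theorem stmt19 {L : Type*} [CompleteLattice L] [CommMonoid L] (res : L → L → L) (hres : ∀ x y z : L, x * y ≤ z ↔ x ≤ res y z) (htop : ∀ x : L, x ≤ 1)
    {A X : Type*} (σ : A → L) (δ : X → A → A → L) (τ : A → L)
    (φ : A → A → L) (hrefl : IsRefl φ) (htrans : IsTrans φ)
    (hwri : ∀ u : List X, rscomp φ (rscomp (relWord δ u) τ) ≤ rscomp (relWord δ u) τ) :
    ∃ ξ : {f : A → L // ∃ u : List X, f = phiFam σ δ φ u} →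
          {p : (X → (A → L)) × L // ∃ u : List X, p = childTuple σ δ φ τ u},
      (∀ u : List X, (ξ ⟨phiFam σ δ φ u, u, rfl⟩).1 = childTuple σ δ φ τ u) ∧
      Function.Surjective ξ ∧
      (∀ s, (ξ s).1.2 = sscomp s.1 τ) ∧
      Cardinal.mk {p : (X → (A → L)) × L // ∃ u : List X, p = childTuple σ δ φ τ u} ≤
        Cardinal.lift (Cardinal.mk {f : A → L // ∃ u : List X, f = phiFam σ δ φ u}) := by
  
  classical
  refine ⟨fun s => ⟨childTuple σ δ φ τ s.2.choose, s.2.choose, rfl⟩, ?_, ?_, ?_, ?_⟩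
  · intro u
    exact childTuple_congr σ δ φ τ
      ((⟨phiFam σ δ φ u, u, rfl⟩ :
        {f : A → L // ∃ u : List X, f = phiFam σ δ φ u}).2.choose_spec).symm
  · rintro ⟨p, u, rfl⟩
    refine ⟨⟨phiFam σ δ φ u, u, rfl⟩, ?_⟩
    apply Subtype.ext
    exact childTuple_congr σ δ φ τ
      ((⟨phiFam σ δ φ u, u, rfl⟩ :
        {f : A → L // ∃ u : List X, f = phiFam σ δ φ u}).2.choose_spec).symm
  · intro s
    simp only [childTuple]
    rw [← s.2.choose_spec]
  · have hsurj : Function.Surjective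
        (fun s : {f : A → L // ∃ u : List X, f = phiFam σ δ φ u} =>
          (⟨childTuple σ δ φ τ s.2.choose, s.2.choose, rfl⟩ :
            {p : (X → (A → L)) × L // ∃ u : List X, p = childTuple σ δ φ τ u})) := by
      rintro ⟨p, u, rfl⟩
      refine ⟨⟨phiFam σ δ φ u, u, rfl⟩, ?_⟩
      apply Subtype.ext
      exact childTuple_congr σ δ φ τ
        ((⟨phiFam σ δ φ u, u, rfl⟩ :
          {f : A → L // ∃ u : List X, f = phiFam σ δ φ u}).2.choose_spec).symm
    have emb := Function.Embedding.ofSurjective _ hsurj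
    calc Cardinal.mk {p : (X → (A → L)) × L // ∃ u : List X, p = childTuple σ δ φ τ u}
        ≤ Cardinal.mk (ULift {f : A → L // ∃ u : List X, f = phiFam σ δ φ u}) :=
          Cardinal.mk_le_of_injective
            (f := fun p => ULift.up (emb p)) (fun a b h => emb.injective (congrArg ULift.down h))
      _ = _ := Cardinal.mk_uLift _
end FuzzyAut
end
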